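/- If u_I and u_II both solve the parabolic obstacle problem: u̇_i(t) − Au_i(t) − f ≥ 0 in H⁻¹, (u_i(t) − u₀, u̇_i(t) − Au_i(t) − f) = 0, u_i(0) = u₀, u_i(t) ≥ u₀ for a.e. t ∈ (0,T), with f ∈ L² time-independent and u_i ∈ H¹(0,T;L²) ∩ L^∞(0,T;H¹₀), then u_I = u_II. -/

import Mathlib

/-!
Let `w = u_I - u_II`. Testing the variational inequality of each solution with `φ = u_j - u₀`
(the other solution minus the obstacle) and subtracting its complementarity condition gives,
after adding the two, `(ẇ, w) + a(w, w) ≤ 0` a.e.; by coercivity `(ẇ, w) ≤ 0`. Since `w(0) = 0`,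
`‖w(t)‖² = 2 ∫₀ᵗ (ẇ, w) ≤ 0`, and `ι` is injective.
-/

open MeasureTheory

/-- A solution of the parabolic obstacle problem with obstacle `u₀`:
`u ∈ H¹(0,T;L²) ∩ L^∞(0,T;H¹₀)` with (distributional) time derivative `du`, satisfying for
a.e. `t ∈ (0,T)`: `u̇ − Au − f ≥ 0` in `H⁻¹` (i.e. `⟨u̇, φ⟩ + a(u,φ) − ⟨f,φ⟩ ≥ 0` for all
`φ ≥ 0` in `H¹₀`), `(u − u₀, u̇ − Au − f) = 0`, `u ≥ u₀`, together with `u(0) = u₀`.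
`H¹₀` is a normed space `V` embedded in `L²` by `ι`. -/
def IsObstacleSolution {α : Type*} [MeasurableSpace α] (μ : Measure α)
    {V : Type*} [NormedAddCommGroup V] [NormedSpace ℝ V]
    (ι : V →L[ℝ] Lp ℝ 2 μ) (a : V →L[ℝ] V →L[ℝ] ℝ) (f : Lp ℝ 2 μ)
    (T : ℝ) (u₀ : V) (u : ℝ → V) (du : ℝ → Lp ℝ 2 μ) : Prop :=
  u 0 = u₀ ∧
  (∀ t ∈ Set.Icc (0:ℝ) T, ι (u t) = ι u₀ + ∫ s in (0:ℝ)..t, du s) ∧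
  AEStronglyMeasurable u (volume.restrict (Set.Ioc 0 T)) ∧
  (∃ M : ℝ, ∀ t ∈ Set.Icc (0:ℝ) T, ‖u t‖ ≤ M) ∧
  AEStronglyMeasurable du (volume.restrict (Set.Ioc 0 T)) ∧
  IntervalIntegrable (fun t => ‖du t‖ ^ 2) volume 0 T ∧
  (∀ᵐ t ∂(volume.restrict (Set.Ioo 0 T)),
    (∀ φ : V, 0 ≤ ι φ →
      0 ≤ (inner ℝ (du t) (ι φ) : ℝ) + a (u t) φ - (inner ℝ f (ι φ) : ℝ)) ∧
    ((inner ℝ (du t) (ι (u t) - ι u₀) : ℝ) + a (u t) (u t - u₀) -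
        (inner ℝ f (ι (u t) - ι u₀) : ℝ) = 0) ∧
    ι u₀ ≤ ι (u t))

open Set
open scoped RealInnerProductSpace

theorem ae_prod_fst_ne_snd {α : Type*} [MeasurableSpace α] [MeasurableEq α]
    {μ ν : Measure α} [SFinite ν] [NullSingletonClass ν] :
    ∀ᵐ p ∂μ.prod ν, p.1 ≠ p.2 := by
  simp only [ae_iff, ne_eq, not_not]
  refine (Measure.measure_prod_null (μ := μ) (ν := ν) measurableSet_diagonal).2
    (Filter.Eventually.of_forall fun x ↦ ?_)
  have hfiber : Prod.mk x ⁻¹' diagonal α = {x} := by ext; simp [eq_comm]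
  simp [hfiber]

theorem integral_prod_eq_two_mul_integral_Iio {ν : Measure ℝ} [SFinite ν] [NullSingletonClass ν]
    {k : ℝ × ℝ → ℝ} (hk : Integrable k (ν.prod ν)) (hsymm : ∀ p, k p.swap = k p) :
    ∫ p, k p ∂ν.prod ν = 2 * ∫ s, ∫ r in Iio s, k (s, r) ∂ν ∂ν := by
  let L := {p : ℝ × ℝ | p.2 < p.1}
  have hL : MeasurableSet L := measurableSet_lt measurable_snd measurable_fst
  have hcompl : (Lᶜ : Set (ℝ × ℝ)) =ᵐ[ν.prod ν] Prod.swap ⁻¹' L := by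
    filter_upwards [ae_prod_fst_ne_snd] with p hp
    exact propext <| not_lt.trans hp.le_iff_lt
  have hswap : ∫ p in Lᶜ, k p ∂ν.prod ν = ∫ p in L, k p ∂ν.prod ν := by
    rw [setIntegral_congr_set hcompl, ← Measure.measurePreserving_swap.setIntegral_preimage_emb
      MeasurableEquiv.prodComm.measurableEmbedding k L]
    simp only [hsymm]
  have hfubini : ∫ p in L, k p ∂ν.prod ν = ∫ s, ∫ r in Iio s, k (s, r) ∂ν ∂ν := by
    rw [← integral_indicator hL, integral_prod _ (hk.indicator hL)]
    refine integral_congr_ae (Filter.Eventually.of_forall fun s ↦ ?_)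
    simp only [← integral_indicator measurableSet_Iio]
    rfl
  rw [← integral_add_compl hL hk, hswap, hfubini, two_mul]

section Energy

variable {E : Type*} [NormedAddCommGroup E] [InnerProductSpace ℝ E]

theorem MeasureTheory.Integrable.inner_prod {α β : Type*} [MeasurableSpace α] [MeasurableSpace β]
    {μ : Measure α} {ν : Measure β} [SFinite ν] {f : α → E} {g : β → E}
    (hf : Integrable f μ) (hg : Integrable g ν) :
    Integrable (fun p : α × β ↦ ⟪f p.1, g p.2⟫) (μ.prod ν) :=
  (hf.norm.mul_prod hg.norm).mono' (hf.1.comp_fst.inner hg.1.comp_snd)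
    (Filter.Eventually.of_forall fun _ ↦ norm_inner_le_norm _ _)

variable [CompleteSpace E]

theorem sq_norm_integral_eq_integral_prod_inner {α : Type*} [MeasurableSpace α] {ν : Measure α}
    [SFinite ν] {D : α → E} (hD : Integrable D ν) :
    ‖∫ s, D s ∂ν‖ ^ 2 = ∫ p, ⟪D p.1, D p.2⟫ ∂ν.prod ν := by
  rw [integral_prod _ (hD.inner_prod hD), ← real_inner_self_eq_norm_sq, ← integral_inner hD]
  refine integral_congr_ae (Filter.Eventually.of_forall fun s ↦ ?_)
  show ⟪_, D s⟫ = ∫ r, ⟪D s, D r⟫ ∂ν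
  rw [real_inner_comm, integral_inner hD]

/-- The integrated chain rule `‖W b‖² = 2 ∫ₐᵇ ⟪W', W⟫` for `W = ∫ₐ D`, which is only absolutely
continuous; proved by Fubini, splitting the square `[a, b]²` along its diagonal. -/
theorem sq_norm_intervalIntegral_eq {D : ℝ → E} {a b : ℝ} (hab : a ≤ b)
    (hD : IntervalIntegrable D volume a b) :
    ‖∫ s in a..b, D s‖ ^ 2 = 2 * ∫ s in a..b, ⟪D s, ∫ r in a..s, D r⟫ := by
  have hD' : IntegrableOn D (Ioc a b) := (intervalIntegrable_iff_integrableOn_Ioc_of_le hab).1 hD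
  rw [intervalIntegral.integral_of_le hab, intervalIntegral.integral_of_le hab,
    sq_norm_integral_eq_integral_prod_inner hD',
    integral_prod_eq_two_mul_integral_Iio (hD'.inner_prod hD') fun _ ↦ real_inner_comm _ _]
  congr 1
  refine setIntegral_congr_fun measurableSet_Ioc fun s hs ↦ ?_
  have hIio : Iio s ∩ Ioc a b = Ioo a s := by
    ext r
    simp only [mem_inter_iff, mem_Iio, mem_Ioc, mem_Ioo]
    exact ⟨fun h ↦ ⟨h.2.1, h.1⟩, fun h ↦ ⟨h.2, h.1, h.2.le.trans hs.2⟩⟩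
  rw [Measure.restrict_restrict measurableSet_Iio, hIio, intervalIntegral.integral_of_le hs.1.le,
    integral_Ioc_eq_integral_Ioo,
    ← integral_inner (hD'.mono_set (Ioo_subset_Ioc_self.trans (Ioc_subset_Ioc_right hs.2)))]

theorem intervalIntegral_eq_zero_of_inner_nonpos {D : ℝ → E} {a b : ℝ} (hab : a ≤ b)
    (hD : IntervalIntegrable D volume a b)
    (hneg : ∀ᵐ s ∂volume.restrict (Ioo a b), ⟪D s, ∫ r in a..s, D r⟫ ≤ 0) :
    ∫ s in a..b, D s = 0 := by
  have hsq : ‖∫ s in a..b, D s‖ ^ 2 ≤ 0 := by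
    rw [sq_norm_intervalIntegral_eq hab hD, intervalIntegral.integral_of_le hab,
      integral_Ioc_eq_integral_Ioo]
    exact mul_nonpos_of_nonneg_of_nonpos zero_le_two (integral_nonpos_of_ae hneg)
  exact norm_eq_zero.1 <| (pow_eq_zero_iff two_ne_zero).1 <| le_antisymm hsq (by positivity)

end Energy

theorem inner_sub_add_apply_sub_nonpos_of_obstacle
    {V H : Type*} [NormedAddCommGroup V] [NormedSpace ℝ V]
    [NormedAddCommGroup H] [InnerProductSpace ℝ H] [PartialOrder H] [IsOrderedAddMonoid H]
    {ι : V →L[ℝ] H} {a : V →L[ℝ] V →L[ℝ] ℝ} {f d : H} {u₀ u v : V}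
    (hvar : ∀ φ : V, 0 ≤ ι φ → 0 ≤ ⟪d, ι φ⟫ + a u φ - ⟪f, ι φ⟫)
    (hcompl : ⟪d, ι u - ι u₀⟫ + a u (u - u₀) - ⟪f, ι u - ι u₀⟫ = 0)
    (hv : ι u₀ ≤ ι v) :
    ⟪d - f, ι (u - v)⟫ + a u (u - v) ≤ 0 := by
  have htest := hvar (v - u₀) (by rwa [map_sub, sub_nonneg])
  simp only [map_sub, inner_sub_left, inner_sub_right] at htest hcompl ⊢
  linarith

namespace IsObstacleSolution

variable {α : Type*} [MeasurableSpace α] {μ : Measure α}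
  {V : Type*} [NormedAddCommGroup V] [NormedSpace ℝ V]
  {ι : V →L[ℝ] Lp ℝ 2 μ} {a : V →L[ℝ] V →L[ℝ] ℝ} {f : Lp ℝ 2 μ} {T : ℝ} {u₀ : V}
  {u uI uII : ℝ → V} {du duI duII : ℝ → Lp ℝ 2 μ}

theorem intervalIntegrable_deriv (h : IsObstacleSolution μ ι a f T u₀ u du) {t : ℝ}
    (ht : t ∈ Icc 0 T) : IntervalIntegrable du volume 0 t := by
  obtain ⟨-, -, -, -, hmeas, hsq, -⟩ := h
  have hT : 0 ≤ T := ht.1.trans ht.2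
  have hL2 : MemLp du 2 (volume.restrict (Ioc 0 T)) :=
    (memLp_two_iff_integrable_sq_norm hmeas).2 hsq.1
  refine IntervalIntegrable.mono_set (b := T) ?_ (uIcc_subset_uIcc_left ?_)
  · exact (intervalIntegrable_iff_integrableOn_Ioc_of_le hT).2 (hL2.integrable one_le_two)
  · rwa [uIcc_of_le hT]

theorem sub_eq_intervalIntegral (hI : IsObstacleSolution μ ι a f T u₀ uI duI)
    (hII : IsObstacleSolution μ ι a f T u₀ uII duII) {t : ℝ} (ht : t ∈ Icc 0 T) :
    ι (uI t) - ι (uII t) = ∫ s in 0..t, (duI s - duII s) := by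
  rw [hI.2.1 t ht, hII.2.1 t ht, add_sub_add_left_eq_sub, intervalIntegral.integral_sub
    (hI.intervalIntegrable_deriv ht) (hII.intervalIntegrable_deriv ht)]

theorem ae_inner_sub_nonpos (hI : IsObstacleSolution μ ι a f T u₀ uI duI)
    (hII : IsObstacleSolution μ ι a f T u₀ uII duII) (ha : ∀ w, 0 ≤ a w w) :
    ∀ᵐ t ∂volume.restrict (Ioo 0 T), ⟪duI t - duII t, ι (uI t) - ι (uII t)⟫ ≤ 0 := by
  filter_upwards [hI.2.2.2.2.2.2, hII.2.2.2.2.2.2] with t ⟨hvarI, hcomplI, hobstI⟩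
    ⟨hvarII, hcomplII, hobstII⟩
  have hleI := inner_sub_add_apply_sub_nonpos_of_obstacle hvarI hcomplI hobstII
  have hleII := inner_sub_add_apply_sub_nonpos_of_obstacle hvarII hcomplII hobstI
  have hpos := ha (uI t - uII t)
  simp only [map_sub, inner_sub_left, inner_sub_right, sub_apply] at hleI hleII hpos ⊢
  linarith

end IsObstacleSolution

theorem obstacle_problem_uniqueness_general
    {α : Type*} [MeasurableSpace α] (μ : Measure α)
    {V : Type*} [NormedAddCommGroup V] [NormedSpace ℝ V]
    (ι : V →L[ℝ] Lp ℝ 2 μ) (hι : Function.Injective ι)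
    (a : V →L[ℝ] V →L[ℝ] ℝ)
    (c : ℝ) (hc : 0 < c) (hcoer : ∀ w : V, c * ‖w‖ ^ 2 ≤ a w w)
    (f : Lp ℝ 2 μ) (T : ℝ) (u₀ : V)
    (uI uII : ℝ → V) (duI duII : ℝ → Lp ℝ 2 μ)
    (hI : IsObstacleSolution μ ι a f T u₀ uI duI)
    (hII : IsObstacleSolution μ ι a f T u₀ uII duII) :
    ∀ t ∈ Set.Icc (0:ℝ) T, uI t = uII t := by
  intro t ht
  have hdiff : ∀ s ∈ Icc 0 t, ι (uI s) - ι (uII s) = ∫ r in 0..s, (duI r - duII r) :=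
    fun s hs ↦ hI.sub_eq_intervalIntegral hII ⟨hs.1, hs.2.trans ht.2⟩
  have hmono : ∀ᵐ s ∂volume.restrict (Ioo 0 t), ⟪duI s - duII s, ι (uI s) - ι (uII s)⟫ ≤ 0 :=
    ae_restrict_of_ae_restrict_of_subset (Ioo_subset_Ioo_right ht.2)
      (hI.ae_inner_sub_nonpos hII fun w ↦ (by positivity : 0 ≤ c * ‖w‖ ^ 2).trans (hcoer w))
  have hzero : ∫ s in 0..t, (duI s - duII s) = 0 := by
    refine intervalIntegral_eq_zero_of_inner_nonpos ht.1
      ((hI.intervalIntegrable_deriv ht).sub (hII.intervalIntegrable_deriv ht)) ?_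
    filter_upwards [hmono, ae_restrict_mem measurableSet_Ioo] with s hs hmem
    rwa [← hdiff s ⟨hmem.1.le, hmem.2.le⟩]
  exact hι <| sub_eq_zero.1 <| (hdiff t ⟨ht.1, le_rfl⟩).trans hzero

/-- Uniqueness for the parabolic obstacle problem (time-independent datum `f ∈ L²`): two
solutions with the same initial datum and obstacle `u₀` coincide on `[0,T]`.  The bilinear
form `a` is coercive, continuous and symmetric, and `ι : H¹₀ ↪ L²` is injective. -/
theorem obstacle_problem_uniqueness
    {α : Type*} [MeasurableSpace α] (μ : Measure α)
    {V : Type*} [NormedAddCommGroup V] [NormedSpace ℝ V]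
    (ι : V →L[ℝ] Lp ℝ 2 μ) (hι : Function.Injective ι)
    (a : V →L[ℝ] V →L[ℝ] ℝ) (hsymm : ∀ u v : V, a u v = a v u)
    (c : ℝ) (hc : 0 < c) (hcoer : ∀ w : V, c * ‖w‖ ^ 2 ≤ a w w)
    (f : Lp ℝ 2 μ) (T : ℝ) (hT : 0 < T) (u₀ : V)
    (uI uII : ℝ → V) (duI duII : ℝ → Lp ℝ 2 μ)
    (hI : IsObstacleSolution μ ι a f T u₀ uI duI)
    (hII : IsObstacleSolution μ ι a f T u₀ uII duII) :
    ∀ t ∈ Set.Icc (0:ℝ) T, uI t = uII t :=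
  obstacle_problem_uniqueness_general μ ι hι a c hc hcoer f T u₀ uI uII duI duII hI hII
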